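/- arXiv:2001.07212 — 3 statements merged into one kernel-verified Lean document; each statement's English description precedes it below -/
import Mathlib

section
/- Let p ≥ 1, s ≥ 1, μ > 0 and let f : ℝ^p → ℝ be differentiable and μ-restricted strongly convex at sparsity level s. Let w, w' ∈ ℝ^p with |supp(w) ∪ supp(w')| ≤ s, and let ε ≥ 0 satisfy f(w) ≤ f(w') + ε. Write I = supp(w), I' = supp(w'), and let ∇_{I∪I'} f(w') denote the vector that agrees with ∇f(w') on the coordinates in I ∪ I' and is zero elsewhere. Then ‖w − w'‖ ≤ (2‖∇_{I∪I'} f(w')‖ + √(2με)) / μ ≤ 2√s · ‖∇f(w')‖_∞ / μ + √(2ε/μ). Moreover, if in addition min_{i ∈ I'} |w'_i| > 2√s · ‖∇f(w')‖_∞ / μ + √(2ε/μ), then supp(w') ⊆ supp(w). -/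
open MeasureTheory Set

noncomputable section

abbrev Vec (p : ℕ) := EuclideanSpace ℝ (Fin p)

/-- support of a vector -/
def spt {p : ℕ} (w : Vec p) : Set (Fin p) := {i | w i ≠ 0}

/-- coordinate-wise maximum norm -/
def linf {p : ℕ} (w : Vec p) : ℝ := ⨆ i, |w i|

/-- smallest magnitude of the nonzero entries -/
def wmin {p : ℕ} (w : Vec p) : ℝ := ⨅ i : spt w, |w (i : Fin p)|

/-- restriction of a vector to an index set (zero outside). -/
def restr {p : ℕ} (J : Set (Fin p)) (v : Vec p) : Vec p :=
  (WithLp.equiv 2 (∀ _ : Fin p, ℝ)).symm (J.indicator fun i => v i)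

/-- μ-restricted strong convexity at sparsity level s -/
def RSC {p : ℕ} (μ : ℝ) (s : ℕ) (f : Vec p → ℝ) : Prop :=
  ∀ w w' : Vec p, (spt (w - w')).ncard ≤ s →
    μ / 2 * ‖w - w'‖ ^ 2 ≤ f w - f w' - (inner ℝ (gradient f w') (w - w') : ℝ)

/-- Lemma A.1: estimation error and support containment for
approximate sparse minimizers of a restricted strongly convex function. -/
theorem stmt0 {p s : ℕ} (hp : 1 ≤ p) (hs : 1 ≤ s) {μ : ℝ} (hμ : 0 < μ)
    (f : Vec p → ℝ) (hdiff : Differentiable ℝ f) (hrsc : RSC μ s f)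
    (w w' : Vec p) (hcard : (spt w ∪ spt w').ncard ≤ s)
    {ε : ℝ} (hε : 0 ≤ ε) (hfw : f w ≤ f w' + ε) :
    (‖w - w'‖ ≤ (2 * ‖restr (spt w ∪ spt w') (gradient f w')‖ + Real.sqrt (2 * μ * ε)) / μ
      ∧ (2 * ‖restr (spt w ∪ spt w') (gradient f w')‖ + Real.sqrt (2 * μ * ε)) / μ
          ≤ 2 * Real.sqrt s * linf (gradient f w') / μ + Real.sqrt (2 * ε / μ))
    ∧ (wmin w' > 2 * Real.sqrt s * linf (gradient f w') / μ + Real.sqrt (2 * ε / μ) →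
        spt w' ⊆ spt w) := by
  have hpne : Nonempty (Fin p) := ⟨⟨0, hp⟩⟩
  set J : Set (Fin p) := spt w ∪ spt w' with hJdef
  set g : Vec p := gradient f w' with hgdef
  set a : ℝ := ‖restr J g‖ with hadef
  set t : ℝ := ‖w - w'‖ with htdef
  have ha : 0 ≤ a := norm_nonneg _
  have ht : 0 ≤ t := norm_nonneg _
  have hsub : spt (w - w') ⊆ J := by
    intro i hi
    simp only [spt, Set.mem_setOf_eq] at hi
    by_contra h
    simp only [hJdef, Set.mem_union, spt, Set.mem_setOf_eq, not_or, not_not] at h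
    apply hi
    show w i - w' i = 0
    rw [h.1, h.2, sub_zero]
  have hcard' : (spt (w - w')).ncard ≤ s :=
    le_trans (Set.ncard_le_ncard hsub (Set.toFinite _)) hcard
  have key := hrsc w w' hcard'
  have hinner : (inner ℝ g (w - w') : ℝ) = inner ℝ (restr J g) (w - w') := by
    simp only [PiLp.inner_apply, RCLike.inner_apply, conj_trivial]
    refine Finset.sum_congr rfl fun i _ => ?_
    by_cases hi : i ∈ J
    · simp [restr, Set.indicator_of_mem hi]
    · have hz : (w - w') i = 0 := by
        by_contra hz; exact hi (hsub hz)
      simp [hz]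
  have hCS : |(inner ℝ (restr J g) (w - w') : ℝ)| ≤ a * t := abs_real_inner_le_norm _ _
  have hquad : μ / 2 * t ^ 2 ≤ ε + a * t := by
    have h1 := neg_abs_le ((inner ℝ (restr J g) (w - w') : ℝ))
    linarith [key, hinner ▸ key, hCS, h1]
  have hS0 : 0 ≤ Real.sqrt (2 * μ * ε) := Real.sqrt_nonneg _
  have hSsq : Real.sqrt (2 * μ * ε) ^ 2 = 2 * μ * ε := Real.sq_sqrt (by positivity)
  have h1 : t ≤ (2 * a + Real.sqrt (2 * μ * ε)) / μ := by
    rw [le_div_iff₀ hμ]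
    nlinarith [sq_nonneg (μ * t - a - Real.sqrt (2 * μ * ε)),
      mul_nonneg ha hS0, mul_nonneg ht hS0, mul_nonneg ha ht, sq_nonneg (μ * t - a)]
  -- linf bounds
  have hlinf_le : ∀ i, |g i| ≤ linf g := fun i =>
    le_ciSup (f := fun j => |g j|) (Set.finite_range _).bddAbove i
  have hlinf0 : 0 ≤ linf g := le_trans (abs_nonneg _) (hlinf_le (Classical.arbitrary _))
  have hA : a ≤ Real.sqrt s * linf g := by
    have hnorm : a = Real.sqrt (∑ i, ‖restr J g i‖ ^ 2) := EuclideanSpace.norm_eq _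
    have hsum : (∑ i, ‖restr J g i‖ ^ 2) ≤ (s : ℝ) * linf g ^ 2 := by
      have hterm : ∀ i, ‖restr J g i‖ ^ 2 ≤ J.indicator (fun _ => linf g ^ 2) i := by
        intro i
        by_cases hi : i ∈ J
        · simp only [restr, WithLp.equiv_symm_apply, PiLp.toLp_apply, Set.indicator_of_mem hi,
            Real.norm_eq_abs]
          rw [← sq_abs, abs_abs]
          exact pow_le_pow_left₀ (abs_nonneg _) (hlinf_le i) 2
        · simp [restr, Set.indicator_of_notMem hi]
      calc (∑ i, ‖restr J g i‖ ^ 2) ≤ ∑ i, J.indicator (fun _ => linf g ^ 2) i :=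
            Finset.sum_le_sum fun i _ => hterm i
        _ = J.ncard * linf g ^ 2 := by
            classical
            have hfe : (Finset.univ.filter (fun i => i ∈ J)) = J.toFinset := by
              ext i; simp
            rw [Finset.sum_indicator_eq_sum_filter, Finset.sum_const, nsmul_eq_mul,
              hfe, Set.ncard_eq_toFinset_card']
        _ ≤ (s : ℝ) * linf g ^ 2 := by
            apply mul_le_mul_of_nonneg_right _ (sq_nonneg _)
            exact_mod_cast hcard
    rw [hnorm]
    calc Real.sqrt (∑ i, ‖restr J g i‖ ^ 2) ≤ Real.sqrt ((s : ℝ) * linf g ^ 2) :=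
          Real.sqrt_le_sqrt hsum
      _ = Real.sqrt s * linf g := by
          rw [Real.sqrt_mul (by positivity), Real.sqrt_sq hlinf0]
  have hSdiv : Real.sqrt (2 * μ * ε) / μ = Real.sqrt (2 * ε / μ) := by
    rw [show (2 : ℝ) * ε / μ = 2 * μ * ε / μ ^ 2 by field_simp,
      Real.sqrt_div (by positivity), Real.sqrt_sq hμ.le]
  have h2 : (2 * a + Real.sqrt (2 * μ * ε)) / μ
      ≤ 2 * Real.sqrt s * linf g / μ + Real.sqrt (2 * ε / μ) := by
    rw [← hSdiv, add_div]
    refine add_le_add (div_le_div_of_nonneg_right ?_ hμ.le) le_rfl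
    nlinarith [hA]
  refine ⟨⟨h1, h2⟩, ?_⟩
  intro hmin i hi
  by_contra hwi
  simp only [spt, Set.mem_setOf_eq, not_not] at hwi
  have hi' : w' i ≠ 0 := hi
  have habs : |w' i| ≤ t := by
    have : |(w - w') i| ≤ t := by
      rw [htdef, EuclideanSpace.norm_eq]
      rw [show |(w - w') i| = Real.sqrt (‖(w - w') i‖ ^ 2) by
        rw [Real.sqrt_sq (norm_nonneg _), Real.norm_eq_abs]]
      apply Real.sqrt_le_sqrt
      exact Finset.single_le_sum (f := fun j => ‖(w - w') j‖ ^ 2)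
        (fun j _ => sq_nonneg _) (Finset.mem_univ i)
    have hwi' : (w - w') i = -(w' i) := by
      show w i - w' i = -(w' i); rw [hwi, zero_sub]
    rwa [hwi', abs_neg] at this
  have hwmin : wmin w' ≤ |w' i| := by
    have hne : Nonempty (spt w') := ⟨⟨i, hi⟩⟩
    exact ciInf_le ⟨0, fun x ⟨j, hj⟩ => hj ▸ abs_nonneg _⟩ (⟨i, hi⟩ : spt w')
  linarith [h1.trans h2]
end
end

section
/- Let p ≥ 1, n ≥ 1, G > 0, λ > 0, let W ⊆ ℝ^p be closed and convex, let J ⊆ {1,…,p}, and let ℓ : ℝ^p × X → ℝ be convex and G-Lipschitz in its first argument. For a dataset T = (ξ_1,…,ξ_n) ∈ X^n write F_T(w) = (1/n)Σ_{i=1}^n ℓ(w;ξ_i). Let S, S' ∈ X^n differ in exactly one coordinate, and suppose w₁ minimizes F_S(w) + (λ/2)‖w‖² over K := {w ∈ W : supp(w) ⊆ J} and w₂ minimizes F_{S'}(w) + (λ/2)‖w‖² over K. Then ‖w₁ − w₂‖ ≤ 4G/(λn), and consequently |ℓ(w₁;ξ) − ℓ(w₂;ξ)| ≤ 4G²/(λn)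 for every ξ ∈ X. -/
/-!
Since `F + (λ/2)‖·‖²` is `λ`-strongly convex, evaluating at the midpoint of a minimizer `a` and any
other admissible `b` shows that the objective grows by at least `(λ/4)‖a - b‖²` from `a` to `b`.
Adding this for the two objectives (each at the other's minimizer) bounds `(λ/2)‖w₁ - w₂‖²` by the
increment of `F_S - F_{S'}` between `w₁` and `w₂`. That difference only involves the replaced data
point, so it is `(2G/n)`-Lipschitz, giving `‖w₁ - w₂‖ ≤ 4G/(λn)`; the bound on the loss follows from
its Lipschitz continuity.
-/

open Set

noncomputable section

/-- G-Lipschitz continuity of the loss in its first argument -/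
def LipLoss {p : ℕ} {X : Type*} (G : ℝ) (loss : Vec p → X → ℝ) : Prop :=
  ∀ w w' ξ, |loss w ξ - loss w' ξ| ≤ G * ‖w - w'‖

/-- empirical risk of the dataset T -/
def emp {p : ℕ} {X : Type*} (loss : Vec p → X → ℝ) {n : ℕ} (T : Fin n → X)
    (w : Vec p) : ℝ := (n : ℝ)⁻¹ * ∑ i, loss w (T i)

section StrongConvexity

variable {E : Type*} [NormedAddCommGroup E] {K : Set E} {f g : E → ℝ} {m : ℝ} {a b : E}

lemma StrongConvexOn.mul_sq_norm_sub_le_of_isMinOn [NormedSpace ℝ E]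
    (hf : StrongConvexOn K m f) (ha : a ∈ K) (hb : b ∈ K) (hmin : IsMinOn f K a) :
    m / 4 * ‖a - b‖ ^ 2 ≤ f b - f a := by
  have hhalf : (0 : ℝ) ≤ 1 / 2 := by norm_num
  have hmid := hf.2 ha hb hhalf hhalf (add_halves 1)
  have hle := isMinOn_iff.1 hmin _ (hf.1 ha hb hhalf hhalf (add_halves 1))
  simp only [smul_eq_mul] at hmid
  linarith

variable [InnerProductSpace ℝ E]

lemma ConvexOn.strongConvexOn_add_sq_norm (hf : ConvexOn ℝ K f) :
    StrongConvexOn K m fun x ↦ f x + m / 2 * ‖x‖ ^ 2 :=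
  strongConvexOn_iff_convex.2 (by simpa only [add_sub_cancel_right] using hf)

lemma norm_sub_le_of_isMinOn_add_sq_norm {L : ℝ} (hf : ConvexOn ℝ K f) (hg : ConvexOn ℝ K g)
    (hm : 0 < m) (hL : 0 ≤ L) (ha : a ∈ K) (hb : b ∈ K)
    (hamin : IsMinOn (fun x ↦ f x + m / 2 * ‖x‖ ^ 2) K a)
    (hbmin : IsMinOn (fun x ↦ g x + m / 2 * ‖x‖ ^ 2) K b)
    (hfg : (f b - g b) - (f a - g a) ≤ L * ‖a - b‖) :
    ‖a - b‖ ≤ 2 * L / m := by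
  have hgrow_f := hf.strongConvexOn_add_sq_norm.mul_sq_norm_sub_le_of_isMinOn ha hb hamin
  have hgrow_g := hg.strongConvexOn_add_sq_norm.mul_sq_norm_sub_le_of_isMinOn hb ha hbmin
  rw [norm_sub_rev] at hgrow_g
  have hsq : m / 2 * ‖a - b‖ ^ 2 ≤ L * ‖a - b‖ := by linarith
  rcases (norm_nonneg (a - b)).eq_or_lt with h0 | hpos
  · rw [← h0]
    positivity
  · rw [le_div_iff₀ hm]
    nlinarith

end StrongConvexity

lemma ConvexOn.fun_finsetSum {E ι : Type*} [AddCommMonoid E] [Module ℝ E] {s : Set E}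
    {t : Finset ι} {f : ι → E → ℝ} (hs : Convex ℝ s) (hf : ∀ i ∈ t, ConvexOn ℝ s (f i)) :
    ConvexOn ℝ s fun x ↦ ∑ i ∈ t, f i x := by
  classical
  induction t using Finset.induction_on with
  | empty => simpa only [Finset.sum_empty] using convexOn_const 0 hs
  | insert j t hj ih =>
    simp_rw [Finset.sum_insert hj]
    exact (hf j (Finset.mem_insert_self j t)).add
      (ih fun i hi ↦ hf i (Finset.mem_insert_of_mem hi))

lemma convex_setOf_spt_subset {p : ℕ} (J : Set (Fin p)) : Convex ℝ {w : Vec p | spt w ⊆ J} := by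
  intro x hx y hy s t _ _ _ i hi
  by_contra hiJ
  have hxi : x i = 0 := not_not.1 fun h ↦ hiJ (hx h)
  have hyi : y i = 0 := not_not.1 fun h ↦ hiJ (hy h)
  exact hi (by simp [hxi, hyi])

section EmpiricalRisk

variable {p : ℕ} {X : Type*} {loss : Vec p → X → ℝ} {n : ℕ}

lemma convexOn_emp (hconv : ∀ ξ, ConvexOn ℝ univ fun w ↦ loss w ξ) (T : Fin n → X) :
    ConvexOn ℝ univ (emp loss T) :=
  (ConvexOn.fun_finsetSum convex_univ fun i _ ↦ hconv (T i)).smul (c := (n : ℝ)⁻¹) (by positivity)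

lemma emp_sub_emp_of_eq_of_ne {S S' : Fin n → X} {i₀ : Fin n}
    (hagree : ∀ i, i ≠ i₀ → S i = S' i) (w : Vec p) :
    emp loss S w - emp loss S' w = (n : ℝ)⁻¹ * (loss w (S i₀) - loss w (S' i₀)) := by
  unfold emp
  rw [← mul_sub, ← Finset.sum_sub_distrib, Finset.sum_eq_single_of_mem i₀ (Finset.mem_univ _)]
  intro i _ hi
  rw [hagree i hi, sub_self]

lemma LipLoss.emp_sub_emp_sub_le {G : ℝ} (hlip : LipLoss G loss) {S S' : Fin n → X} {i₀ : Fin n}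
    (hagree : ∀ i, i ≠ i₀ → S i = S' i) (w w' : Vec p) :
    (emp loss S w' - emp loss S' w') - (emp loss S w - emp loss S' w)
      ≤ 2 * G / n * ‖w - w'‖ := by
  rw [emp_sub_emp_of_eq_of_ne hagree, emp_sub_emp_of_eq_of_ne hagree]
  have h₁ := (le_abs_self _).trans (hlip w' w (S i₀))
  have h₂ := (le_abs_self _).trans (hlip w w' (S' i₀))
  rw [norm_sub_rev] at h₁
  calc _ = (n : ℝ)⁻¹ * ((loss w' (S i₀) - loss w (S i₀)) + (loss w (S' i₀) - loss w' (S' i₀))) :=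
        by ring
    _ ≤ (n : ℝ)⁻¹ * (G * ‖w - w'‖ + G * ‖w - w'‖) := by gcongr
    _ = 2 * G / n * ‖w - w'‖ := by ring

end EmpiricalRisk

theorem stmt12_general {p n : ℕ} {G lam : ℝ} (hG : 0 < G)
    (hlam : 0 < lam) {X : Type*}
    (W : Set (Vec p)) (hWconv : Convex ℝ W)
    (J : Set (Fin p))
    (loss : Vec p → X → ℝ)
    (hconv : ∀ ξ, ConvexOn ℝ Set.univ fun w => loss w ξ)
    (hlip : LipLoss G loss)
    (S S' : Fin n → X) (i₀ : Fin n)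
    (hagree : ∀ i, i ≠ i₀ → S i = S' i)
    (w₁ w₂ : Vec p)
    (hw₁mem : w₁ ∈ W) (hw₁spt : spt w₁ ⊆ J)
    (hw₁min : ∀ u ∈ W, spt u ⊆ J →
      emp loss S w₁ + lam / 2 * ‖w₁‖ ^ 2 ≤ emp loss S u + lam / 2 * ‖u‖ ^ 2)
    (hw₂mem : w₂ ∈ W) (hw₂spt : spt w₂ ⊆ J)
    (hw₂min : ∀ u ∈ W, spt u ⊆ J →
      emp loss S' w₂ + lam / 2 * ‖w₂‖ ^ 2 ≤ emp loss S' u + lam / 2 * ‖u‖ ^ 2) :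
    ‖w₁ - w₂‖ ≤ 4 * G / (lam * n)
      ∧ ∀ ξ : X, |loss w₁ ξ - loss w₂ ξ| ≤ 4 * G ^ 2 / (lam * n) := by
  have hK : Convex ℝ (W ∩ {w | spt w ⊆ J}) := hWconv.inter (convex_setOf_spt_subset J)
  have hdist : ‖w₁ - w₂‖ ≤ 4 * G / (lam * n) := by
    have h := norm_sub_le_of_isMinOn_add_sq_norm ((convexOn_emp hconv S).subset (subset_univ _) hK)
      ((convexOn_emp hconv S').subset (subset_univ _) hK) hlam (by positivity)
      ⟨hw₁mem, hw₁spt⟩ ⟨hw₂mem, hw₂spt⟩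
      (isMinOn_iff.2 fun u hu ↦ hw₁min u hu.1 hu.2) (isMinOn_iff.2 fun u hu ↦ hw₂min u hu.1 hu.2)
      (hlip.emp_sub_emp_sub_le hagree w₁ w₂)
    convert h using 1
    ring
  refine ⟨hdist, fun ξ ↦ ?_⟩
  calc |loss w₁ ξ - loss w₂ ξ| ≤ G * ‖w₁ - w₂‖ := hlip w₁ w₂ ξ
    _ ≤ G * (4 * G / (lam * n)) := by gcongr
    _ = 4 * G ^ 2 / (lam * n) := by ring

/-- uniform stability of the ℓ₂-regularized empirical risk minimizer
restricted to a fixed index set J, for datasets differing in a single element. -/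
theorem stmt12 {p n : ℕ} (hp : 1 ≤ p) (hn : 1 ≤ n) {G lam : ℝ} (hG : 0 < G)
    (hlam : 0 < lam) {X : Type*}
    (W : Set (Vec p)) (hWclosed : IsClosed W) (hWconv : Convex ℝ W)
    (J : Set (Fin p))
    (loss : Vec p → X → ℝ)
    (hconv : ∀ ξ, ConvexOn ℝ Set.univ fun w => loss w ξ)
    (hlip : LipLoss G loss)
    (S S' : Fin n → X) (i₀ : Fin n) (hne : S i₀ ≠ S' i₀)
    (hagree : ∀ i, i ≠ i₀ → S i = S' i)
    (w₁ w₂ : Vec p)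
    (hw₁mem : w₁ ∈ W) (hw₁spt : spt w₁ ⊆ J)
    (hw₁min : ∀ u ∈ W, spt u ⊆ J →
      emp loss S w₁ + lam / 2 * ‖w₁‖ ^ 2 ≤ emp loss S u + lam / 2 * ‖u‖ ^ 2)
    (hw₂mem : w₂ ∈ W) (hw₂spt : spt w₂ ⊆ J)
    (hw₂min : ∀ u ∈ W, spt u ⊆ J →
      emp loss S' w₂ + lam / 2 * ‖w₂‖ ^ 2 ≤ emp loss S' u + lam / 2 * ‖u‖ ^ 2) :
    ‖w₁ - w₂‖ ≤ 4 * G / (lam * n)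
      ∧ ∀ ξ : X, |loss w₁ ξ - loss w₂ ξ| ≤ 4 * G ^ 2 / (lam * n) :=
  stmt12_general hG hlam W hWconv J loss hconv hlip S S' i₀ hagree w₁ w₂ hw₁mem hw₁spt hw₁min hw₂mem
    hw₂spt hw₂min
end
end

section
/- Let p ≥ 1, s ≥ 1, 0 < μ ≤ L, and let f : ℝ^p → ℝ be differentiable, μ-restricted strongly convex at sparsity level s, and L-strongly smooth. Let J ⊆ {1,…,p} with |J| ≤ s, let w, w' ∈ ℝ^p with supp(w) ∪ supp(w') ⊆ J, and let η ∈ (0, 2/(L+μ)). Writing ∇_J f(u) for the vector that agrees with ∇f(u) on J and is zero elsewhere, we have ‖w − w' − η∇_J f(w) + η∇_J f(w')‖ ≤ (1 − ηLμ/(L+μ))·‖w − w'‖. -/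
open Set

noncomputable section

/-- L-strong smoothness -/
def SSmooth {p : ℕ} (L : ℝ) (f : Vec p → ℝ) : Prop :=
  ∀ w w' : Vec p, f w - f w' - (inner ℝ (gradient f w') (w - w') : ℝ) ≤ L / 2 * ‖w - w'‖ ^ 2

lemma restr_apply {p : ℕ} (J : Set (Fin p)) (v : Vec p) (i : Fin p) :
    restr J v i = J.indicator (fun i => v i) i := rfl

lemma spt_subset_iff {p : ℕ} (J : Set (Fin p)) (v : Vec p) :
    spt v ⊆ J ↔ ∀ i, i ∉ J → v i = 0 := by
  constructor
  · intro h i hi; by_contra hne; exact hi (h hne)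
  · intro h i hi; by_contra hni; exact hi (h i hni)

lemma inner_restr {p : ℕ} (J : Set (Fin p)) (v u : Vec p) (hu : spt u ⊆ J) :
    (inner ℝ (restr J v) u : ℝ) = inner ℝ v u := by
  rw [spt_subset_iff] at hu
  simp only [PiLp.inner_apply, RCLike.inner_apply, starRingEnd_apply, star_trivial]
  apply Finset.sum_congr rfl
  intro i _
  by_cases h : i ∈ J
  · simp [restr_apply, Set.indicator_of_mem h]
  · simp [hu i h]

lemma ncard_le {p s : ℕ} {J : Finset (Fin p)} (hJ : J.card ≤ s) {v : Vec p}
    (hv : spt v ⊆ ↑J) : (spt v).ncard ≤ s := by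
  calc (spt v).ncard ≤ (↑J : Set (Fin p)).ncard := Set.ncard_le_ncard hv J.finite_toSet
  _ = J.card := Set.ncard_coe_finset J
  _ ≤ s := hJ

lemma key_ineq {p s : ℕ} {L μ : ℝ} (f : Vec p → ℝ)
    (hrsc : RSC μ s f) (hsm : SSmooth L f)
    (J : Finset (Fin p)) (hJ : J.card ≤ s)
    (a b : Vec p) (ha : spt a ⊆ ↑J) (hb : spt b ⊆ ↑J) (t : ℝ) :
    μ / 2 * ‖a - b‖ ^ 2
      + (t - (L - μ) / 2 * t ^ 2) *
        ‖restr (↑J) (gradient f a) - restr (↑J) (gradient f b) - μ • (a - b)‖ ^ 2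
      ≤ f a - f b - (inner ℝ (gradient f b) (a - b) : ℝ) := by
  set q : Vec p := restr (↑J) (gradient f a) - restr (↑J) (gradient f b) - μ • (a - b) with hq
  have hqJ : spt q ⊆ ↑J := by
    rw [spt_subset_iff]
    intro i hi
    have hai := (spt_subset_iff _ a).mp ha i hi
    have hbi := (spt_subset_iff _ b).mp hb i hi
    simp [hq, restr_apply, Set.indicator_of_notMem hi, hai, hbi]
  set z : Vec p := a - t • q with hz
  have hzbJ : spt (z - b) ⊆ ↑J := by
    rw [spt_subset_iff]
    intro i hi
    have hai := (spt_subset_iff _ a).mp ha i hi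
    have hbi := (spt_subset_iff _ b).mp hb i hi
    have hqi := (spt_subset_iff _ q).mp hqJ i hi
    simp [hz, hai, hbi, hqi]
  have h1 : f z - f a - (inner ℝ (gradient f a) (z - a) : ℝ) ≤ L / 2 * ‖z - a‖ ^ 2 := hsm z a
  have h2 : μ / 2 * ‖z - b‖ ^ 2 ≤ f z - f b - (inner ℝ (gradient f b) (z - b) : ℝ) :=
    hrsc z b (ncard_le hJ hzbJ)
  have hza : z - a = -(t • q) := by rw [hz]; abel
  have hzb : z - b = (a - b) - t • q := by rw [hz]; abel
  -- rewrite norms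
  have hnza : ‖z - a‖ ^ 2 = t ^ 2 * ‖q‖ ^ 2 := by
    rw [hza, norm_neg, norm_smul, mul_pow]; simp [sq_abs]
  have hnzb : ‖z - b‖ ^ 2 = ‖a - b‖ ^ 2 - 2 * (t * (inner ℝ (a - b) q : ℝ)) + t ^ 2 * ‖q‖ ^ 2 := by
    rw [hzb, @norm_sub_sq_real, real_inner_smul_right, norm_smul, mul_pow, Real.norm_eq_abs, sq_abs]
  -- rewrite inner ℝ products
  have hia : (inner ℝ (gradient f a) (z - a) : ℝ) = -(t * (inner ℝ (restr (↑J) (gradient f a)) q : ℝ)) := by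
    rw [hza, inner_neg_right, real_inner_smul_right, inner_restr _ _ _ hqJ]
  have hib : (inner ℝ (gradient f b) (z - b) : ℝ)
      = (inner ℝ (gradient f b) (a - b) : ℝ) - t * (inner ℝ (restr (↑J) (gradient f b)) q : ℝ) := by
    rw [hzb, inner_sub_right, real_inner_smul_right, inner_restr _ _ _ hqJ]
  have hAB : (inner ℝ (restr (↑J) (gradient f a)) q : ℝ) - (inner ℝ (restr (↑J) (gradient f b)) q : ℝ)
      = ‖q‖ ^ 2 + μ * (inner ℝ (a - b) q : ℝ) := by
    rw [← inner_sub_left]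
    have : restr (↑J) (gradient f a) - restr (↑J) (gradient f b) = q + μ • (a - b) := by
      rw [hq]; abel
    rw [this, inner_add_left, real_inner_self_eq_norm_sq, real_inner_smul_left]
  set A := (inner ℝ (restr (↑J) (gradient f a)) q : ℝ)
  set B := (inner ℝ (restr (↑J) (gradient f b)) q : ℝ)
  set X := (inner ℝ (a - b) q : ℝ)
  rw [hnza] at h1
  rw [hnzb, hib] at h2
  rw [hia] at h1
  have hABt : t * A - t * B = t * ‖q‖ ^ 2 + μ * (t * X) := by
    linear_combination t * hAB
  nlinarith [h1, h2, hABt]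

set_option maxHeartbeats 1000000 in
/-- Lemma C.1: contraction of a restricted gradient step for a
restricted strongly convex and smooth function. -/
theorem stmt16 {p s : ℕ} (hp : 1 ≤ p) (hs : 1 ≤ s) {L μ η : ℝ}
    (hμ : 0 < μ) (hμL : μ ≤ L)
    (f : Vec p → ℝ) (hdiff : Differentiable ℝ f) (hrsc : RSC μ s f) (hsm : SSmooth L f)
    (J : Finset (Fin p)) (hJ : J.card ≤ s)
    (w w' : Vec p) (hw : spt w ∪ spt w' ⊆ ↑J)
    (hη : η ∈ Set.Ioo (0 : ℝ) (2 / (L + μ))) :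
    ‖w - w' - η • restr (↑J) (gradient f w) + η • restr (↑J) (gradient f w')‖
      ≤ (1 - η * L * μ / (L + μ)) * ‖w - w'‖ := by
  obtain ⟨hη0, hη2⟩ := hη
  have hL : 0 < L := lt_of_lt_of_le hμ hμL
  have hK : 0 < L + μ := by linarith
  have hwJ : spt w ⊆ ↑J := fun i hi => hw (Or.inl hi)
  have hw'J : spt w' ⊆ ↑J := fun i hi => hw (Or.inr hi)
  set x : Vec p := w - w' with hx
  set g : Vec p := restr (↑J) (gradient f w) - restr (↑J) (gradient f w') with hg
  set q : Vec p := restr (↑J) (gradient f w) - restr (↑J) (gradient f w') - μ • (w - w') with hq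
  have hxJ : spt x ⊆ ↑J := by
    rw [spt_subset_iff]
    intro i hi
    have h1 := (spt_subset_iff _ w).mp hwJ i hi
    have h2 := (spt_subset_iff _ w').mp hw'J i hi
    simp [hx, h1, h2]
  have hq' : restr (↑J) (gradient f w') - restr (↑J) (gradient f w) - μ • (w' - w) = -q := by
    rw [hq]; module
  have hgq : g = q + μ • x := by rw [hg, hq, hx]; module
  set G : ℝ := (inner ℝ g x : ℝ) with hG
  have hGfull : G = (inner ℝ (gradient f w) x : ℝ) - (inner ℝ (gradient f w') x : ℝ) := by
    rw [hG, hg, inner_sub_left, inner_restr _ _ _ hxJ, inner_restr _ _ _ hxJ]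
  have key2 : ∀ t : ℝ, μ * ‖x‖ ^ 2 + (2 * t - (L - μ) * t ^ 2) * ‖q‖ ^ 2 ≤ G := by
    intro t
    have K1 := key_ineq f hrsc hsm J hJ w w' hwJ hw'J t
    have K2 := key_ineq f hrsc hsm J hJ w' w hw'J hwJ t
    rw [hq', norm_neg] at K2
    have hsw : w' - w = -x := by rw [hx]; module
    rw [hsw, norm_neg, inner_neg_right] at K2
    rw [hGfull]
    linarith [K1, K2]
  have hqexp : ‖q‖ ^ 2 = ‖g‖ ^ 2 - 2 * μ * G + μ ^ 2 * ‖x‖ ^ 2 := by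
    have hqg : q = g - μ • x := by rw [hgq]; module
    rw [hqg, @norm_sub_sq_real, real_inner_smul_right, norm_smul, mul_pow,
      Real.norm_eq_abs, sq_abs, hG]
    ring
  have hB : μ * L * ‖x‖ ^ 2 + ‖g‖ ^ 2 ≤ (L + μ) * G := by
    rcases eq_or_lt_of_le hμL with heq | hlt
    · subst heq
      have hq0 : ‖q‖ ^ 2 = 0 := by
        by_contra h
        have hqpos : 0 < ‖q‖ ^ 2 := lt_of_le_of_ne (sq_nonneg _) (Ne.symm h)
        have hk := key2 ((G - μ * ‖x‖ ^ 2 + 1) / (2 * ‖q‖ ^ 2))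
        have hexp : (2 * ((G - μ * ‖x‖ ^ 2 + 1) / (2 * ‖q‖ ^ 2))
            - (μ - μ) * ((G - μ * ‖x‖ ^ 2 + 1) / (2 * ‖q‖ ^ 2)) ^ 2) * ‖q‖ ^ 2
            = G - μ * ‖x‖ ^ 2 + 1 := by
          have hq1 : ‖q‖ ≠ 0 := fun h0 => h (by rw [h0]; ring)
          rw [sub_self, zero_mul, sub_zero]
          field_simp
        rw [hexp] at hk
        linarith
      linarith [hqexp, hq0]
    · set t : ℝ := 1 / (L - μ) with ht
      have hLμ : 0 < L - μ := by linarith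
      have hcoef : 2 * t - (L - μ) * t ^ 2 = 1 / (L - μ) := by
        rw [ht]; field_simp; ring
      have hk := key2 t
      rw [hcoef] at hk
      have hk' : μ * (L - μ) * ‖x‖ ^ 2 + ‖q‖ ^ 2 ≤ (L - μ) * G := by
        have h2 := mul_le_mul_of_nonneg_left hk (le_of_lt hLμ)
        calc μ * (L - μ) * ‖x‖ ^ 2 + ‖q‖ ^ 2
            = (L - μ) * (μ * ‖x‖ ^ 2 + 1 / (L - μ) * ‖q‖ ^ 2) := by field_simp
          _ ≤ (L - μ) * G := h2
      nlinarith [hk', hqexp]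
  have hvec : w - w' - η • restr (↑J) (gradient f w) + η • restr (↑J) (gradient f w')
      = x - η • g := by
    rw [hx, hg]; module
  rw [hvec]
  have hnorm : ‖x - η • g‖ ^ 2 = ‖x‖ ^ 2 - 2 * η * G + η ^ 2 * ‖g‖ ^ 2 := by
    rw [@norm_sub_sq_real, real_inner_smul_right, norm_smul, mul_pow,
      Real.norm_eq_abs, sq_abs, hG, real_inner_comm]
    ring
  have h2K : η * (L + μ) < 2 := (lt_div_iff₀ hK).mp hη2
  have hfac : 0 ≤ 1 - η * L * μ / (L + μ) := by
    rw [sub_nonneg, div_le_one hK]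
    nlinarith [mul_lt_mul_of_pos_right h2K (mul_pos hL hμ), sq_nonneg (L - μ),
      mul_pos hL hμ]
  have hBS : 0 ≤ (L + μ) * G - (μ * L * ‖x‖ ^ 2 + ‖g‖ ^ 2) := by linarith
  have key : (‖x‖ ^ 2 - 2 * η * G + η ^ 2 * ‖g‖ ^ 2) * (L + μ) ^ 2
      ≤ (L + μ - η * L * μ) ^ 2 * ‖x‖ ^ 2 := by
    nlinarith [mul_nonneg (by positivity : (0:ℝ) ≤ 2 * η * (L + μ)) hBS,
      sq_nonneg (η * L * μ * ‖x‖),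
      mul_nonneg (mul_nonneg (mul_nonneg hη0.le hK.le)
        (by linarith : (0:ℝ) ≤ 2 - η * (L + μ))) (sq_nonneg ‖g‖)]
  have hsq : ‖x - η • g‖ ^ 2 ≤ ((1 - η * L * μ / (L + μ)) * ‖x‖) ^ 2 := by
    have hrw : ((1 - η * L * μ / (L + μ)) * ‖x‖) ^ 2
        = (L + μ - η * L * μ) ^ 2 * ‖x‖ ^ 2 / (L + μ) ^ 2 := by
      field_simp
    rw [hnorm, hrw, le_div_iff₀ (by positivity : (0:ℝ) < (L + μ) ^ 2)]
    exact key
  have hx0 : 0 ≤ (1 - η * L * μ / (L + μ)) * ‖x‖ := mul_nonneg hfac (norm_nonneg _)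
  exact le_of_pow_le_pow_left₀ two_ne_zero hx0 hsq
end
end
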